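/- Fix T > 0 and for each real a with a·T < 1 let k^u(a) denote the unique k > |a| satisfying T·√(k² − a²) = arccos(a/k). Then lim_{a→−∞} k^u(a)/|a| = 1 and lim_{a→(1/T)⁻} k^u(a) = 1/T. -/

import Mathlib

/-!
Put `θ = arccos (a / k) ∈ (0, π)`. Since `√(k² - a²) = k sin θ` and `a = k cos θ`, the
defining equation reads `T k sin θ = θ`, i.e. `k = 1 / (T sinc θ)` and `a T = θ cot θ`.

As `a → -∞`: `k² - a² = (θ / T)² ≤ (π / T)²` forces `|a| < k ≤ |a| + π / T`.

As `a → (1/T)⁻`: `θ cot θ = a T → 1`. The function `θ ↦ θ cot θ` is strictly decreasing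
on `(0, π)` and stays below `1` there, so this forces `θ → 0`, whence
`k = 1 / (T sinc θ) → 1 / T`.
-/

open Real Filter Set Topology

namespace Real

lemma mul_cos_lt_sin {x : ℝ} (h0 : 0 < x) (hπ : x < π) : x * cos x < sin x := by
  rcases lt_or_ge x (π / 2) with h | h
  · have hc : 0 < cos x := cos_pos_of_mem_Ioo ⟨by linarith, h⟩
    have ht := lt_tan h0 h
    rw [tan_eq_sin_div_cos, lt_div_iff₀ hc] at ht
    exact ht
  · have hc : cos x ≤ 0 := cos_nonpos_of_pi_div_two_le_of_le h (by linarith [pi_pos])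
    have hs : 0 < sin x := sin_pos_of_pos_of_lt_pi h0 hπ
    nlinarith

lemma strictAntiOn_mul_cos_div_sin :
    StrictAntiOn (fun x : ℝ => x * cos x / sin x) (Ioo 0 π) := by
  apply strictAntiOn_of_deriv_neg (convex_Ioo 0 π)
  · refine ContinuousOn.div (by fun_prop) (by fun_prop) fun x hx => ?_
    exact (sin_pos_of_pos_of_lt_pi hx.1 hx.2).ne'
  · intro x hx
    rw [interior_Ioo] at hx
    have hs : 0 < sin x := sin_pos_of_pos_of_lt_pi hx.1 hx.2
    have hd : HasDerivAt (fun x : ℝ => x * cos x / sin x)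
        (((1 * cos x + x * -sin x) * sin x - x * cos x * cos x) / sin x ^ 2) x :=
      ((hasDerivAt_id x).mul (hasDerivAt_cos x)).div (hasDerivAt_sin x) hs.ne'
    rw [hd.deriv]
    refine div_neg_of_neg_of_pos ?_ (by positivity)
    have hnum : (1 * cos x + x * -sin x) * sin x - x * cos x * cos x = sin (2 * x) / 2 - x := by
      rw [sin_two_mul]
      linear_combination (-x) * sin_sq_add_cos_sq x
    rw [hnum]
    linarith [sin_lt (by linarith [hx.1] : 0 < 2 * x)]

lemma tendsto_nhds_zero_of_mul_cos_div_sin {α : Type*} {l : Filter α} {θ : α → ℝ}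
    (hθ : ∀ᶠ x in l, θ x ∈ Ioo 0 π)
    (h : Tendsto (fun x => θ x * cos (θ x) / sin (θ x)) l (𝓝 1)) : Tendsto θ l (𝓝 0) := by
  rw [Metric.tendsto_nhds]
  intro ε hε
  set η := min ε 1
  have hη : η ∈ Ioo 0 π :=
    ⟨lt_min hε one_pos, (min_le_right _ _).trans_lt (by linarith [pi_gt_three])⟩
  have hη1 : η * cos η / sin η < 1 :=
    (div_lt_one (sin_pos_of_pos_of_lt_pi hη.1 hη.2)).mpr (mul_cos_lt_sin hη.1 hη.2)
  filter_upwards [hθ, h.eventually (lt_mem_nhds hη1)] with x hx hlt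
  have hxη : θ x < η := by
    by_contra! hge
    exact hlt.not_ge (strictAntiOn_mul_cos_div_sin.antitoneOn hη hx hge)
  rw [dist_zero_right, norm_of_nonneg hx.1.le]
  exact hxη.trans_le (min_le_left _ _)

lemma sqrt_sq_sub_sq_eq_mul_sin_arccos {a k : ℝ} (hk : 0 < k) :
    √(k ^ 2 - a ^ 2) = k * sin (arccos (a / k)) := by
  rw [sin_arccos, show k ^ 2 - a ^ 2 = k ^ 2 * (1 - (a / k) ^ 2) by field_simp,
    sqrt_mul (by positivity), sqrt_sq hk.le]

lemma arccos_div_mem_Ioo {a k : ℝ} (hk : |a| < k) : arccos (a / k) ∈ Ioo 0 π := by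
  have hk0 : 0 < k := (abs_nonneg a).trans_lt hk
  obtain ⟨hka, hak⟩ := abs_lt.mp hk
  refine ⟨arccos_pos.mpr ((div_lt_one hk0).mpr hak), ?_⟩
  refine (arccos_le_pi _).lt_of_ne fun h => ?_
  have := arccos_eq_pi.mp h
  rw [div_le_iff₀ hk0] at this
  linarith

end Real

section arccosEquation

variable {T a k : ℝ} (hk : |a| < k) (heq : T * √(k ^ 2 - a ^ 2) = arccos (a / k))
include hk heq

lemma sub_abs_le_pi_div (hT : 0 < T) : k - |a| ≤ π / T := by
  have hsqrt : √(k ^ 2 - a ^ 2) ≤ π / T := by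
    rw [le_div_iff₀ hT, mul_comm, heq]
    exact arccos_le_pi _
  rw [sqrt_le_left (by positivity)] at hsqrt
  have : (k - |a|) ^ 2 ≤ (π / T) ^ 2 := by nlinarith [sq_abs a, abs_nonneg a]
  exact abs_le_of_sq_le_sq' this (by positivity) |>.2

lemma mul_mul_sin_arccos_eq : T * k * sin (arccos (a / k)) = arccos (a / k) := by
  rw [mul_assoc, ← sqrt_sq_sub_sq_eq_mul_sin_arccos ((abs_nonneg a).trans_lt hk), heq]

lemma mul_eq_arccos_mul_cos_div_sin :
    a * T = arccos (a / k) * cos (arccos (a / k)) / sin (arccos (a / k)) := by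
  have hk0 : 0 < k := (abs_nonneg a).trans_lt hk
  obtain ⟨hθ0, hθπ⟩ := arccos_div_mem_Ioo hk
  obtain ⟨hka, hak⟩ := abs_lt.mp hk
  have hcos : cos (arccos (a / k)) = a / k :=
    cos_arccos (by rw [le_div_iff₀ hk0]; linarith) ((div_le_one hk0).mpr hak.le)
  rw [eq_div_iff (sin_pos_of_pos_of_lt_pi hθ0 hθπ).ne', hcos]
  nth_rw 2 [← mul_mul_sin_arccos_eq hk heq]
  field_simp

lemma eq_one_div_mul_sinc_arccos : k = 1 / (T * sinc (arccos (a / k))) := by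
  obtain ⟨hθ0, hθπ⟩ := arccos_div_mem_Ioo hk
  have hs : sin (arccos (a / k)) ≠ 0 := (sin_pos_of_pos_of_lt_pi hθ0 hθπ).ne'
  have hT : T ≠ 0 := by rintro rfl; simp at heq; linarith
  rw [sinc_of_ne_zero hθ0.ne', ← mul_div_assoc]
  nth_rw 2 [← mul_mul_sin_arccos_eq hk heq]
  field_simp

end arccosEquation

lemma tendsto_div_abs_atBot_of_le_add_const {f : ℝ → ℝ} (C : ℝ)
    (hf : ∀ᶠ a in atBot, |a| ≤ f a ∧ f a ≤ |a| + C) :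
    Tendsto (fun a => f a / |a|) atBot (𝓝 1) := by
  have hupper : Tendsto (fun a : ℝ => 1 + C / |a|) atBot (𝓝 1) := by
    simpa using tendsto_const_nhds.add
      (tendsto_const_nhds.div_atTop (tendsto_abs_atBot_atTop (G := ℝ)))
  refine tendsto_of_tendsto_of_tendsto_of_le_of_le' tendsto_const_nhds hupper ?_ ?_
  all_goals
    filter_upwards [hf, eventually_lt_atBot 0] with a ⟨hlo, hhi⟩ ha
    have h0 : 0 < |a| := abs_pos.mpr ha.ne
  · rwa [le_div_iff₀ h0, one_mul]
  · rwa [div_le_iff₀ h0, add_mul, one_mul, div_mul_cancel₀ _ h0.ne']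

theorem stmt2 (T : ℝ) (hT : 0 < T) (ku : ℝ → ℝ)
    (hku : ∀ a : ℝ, a * T < 1 →
      |a| < ku a ∧ T * Real.sqrt ((ku a) ^ 2 - a ^ 2) = Real.arccos (a / ku a)) :
    Filter.Tendsto (fun a : ℝ => ku a / |a|) Filter.atBot (nhds 1) ∧
    Filter.Tendsto ku (nhdsWithin (1 / T) (Set.Iio (1 / T))) (nhds (1 / T)) := by
  constructor
  · refine tendsto_div_abs_atBot_of_le_add_const (π / T) ?_
    filter_upwards [eventually_lt_atBot 0] with a ha
    obtain ⟨hk, heq⟩ := hku a (by nlinarith)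
    exact ⟨hk.le, by linarith [sub_abs_le_pi_div hk heq hT]⟩
  · have hbelow : ∀ᶠ a in 𝓝[<] (1 / T), a * T < 1 := by
      filter_upwards [self_mem_nhdsWithin] with a ha
      exact (lt_div_iff₀ hT).mp ha
    have haT : Tendsto (fun a => a * T) (𝓝[<] (1 / T)) (𝓝 1) := by
      refine tendsto_nhdsWithin_of_tendsto_nhds ?_
      simpa [hT.ne'] using (continuous_mul_const T).tendsto (1 / T)
    have hθ : Tendsto (fun a => arccos (a / ku a)) (𝓝[<] (1 / T)) (𝓝 0) :=
      tendsto_nhds_zero_of_mul_cos_div_sin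
        (hbelow.mono fun a ha => arccos_div_mem_Ioo (hku a ha).1)
        (haT.congr' (hbelow.mono fun a ha => (hku a ha).elim mul_eq_arccos_mul_cos_div_sin))
    have hk : Tendsto (fun a => 1 / (T * sinc (arccos (a / ku a)))) (𝓝[<] (1 / T))
        (𝓝 (1 / T)) := by
      simpa using (((continuous_sinc.tendsto 0).comp hθ).const_mul T).inv₀ (by simp [hT.ne'])
    exact hk.congr' (hbelow.mono fun a ha => ((hku a ha).elim eq_one_div_mul_sinc_arccos).symm)
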